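/- One Riccati step can be rewritten in Woodbury form: Aᵀ Π A − (1/ε) Aᵀ Π B Σ^{1/2} (I + Σ^{1/2} C Σ^{1/2})^{−1} Σ^{1/2} Bᵀ Π A = Aᵀ Π^{1/2} ( I + Π^{1/2} B Σ^{1/2} (ε I + Σ^{1/2} R Σ^{1/2})^{−1} Σ^{1/2} Bᵀ Π^{1/2} )^{−1} Π^{1/2} A, where C = (R + Bᵀ Π B)/ε. -/

import Mathlib

open Matrix Filter Topology

/-- The unique symmetric positive semidefinite square root of a positive
semidefinite real matrix (junk value `0` if the matrix is not PSD). -/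
noncomputable def msqrt {d : ℕ} (X : Matrix (Fin d) (Fin d) ℝ) :
    Matrix (Fin d) (Fin d) ℝ :=
  letI := Classical.propDecidable X.PosSemidef
  if h : X.PosSemidef then
    (h.1.eigenvectorUnitary : Matrix (Fin d) (Fin d) ℝ) * diagonal (Real.sqrt ∘ h.1.eigenvalues) *
      (star h.1.eigenvectorUnitary : Matrix (Fin d) (Fin d) ℝ)
  else 0

/-- The Frobenius norm of a real square matrix. -/
noncomputable def frob {d : ℕ} (X : Matrix (Fin d) (Fin d) ℝ) : ℝ :=
  Real.sqrt (∑ i, ∑ j, X i j ^ 2)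

/-- Data of the mutual information optimal control problem for a discrete-time
linear system `x_{k+1} = A_k x_k + B_k u_k + w_k`. -/
structure LQData (n m : ℕ) where
  ε : ℝ
  A : ℕ → Matrix (Fin n) (Fin n) ℝ
  B : ℕ → Matrix (Fin n) (Fin m) ℝ
  R : ℕ → Matrix (Fin m) (Fin m) ℝ
  F : Matrix (Fin n) (Fin n) ℝ
  Sw : ℕ → Matrix (Fin n) (Fin n) ℝ
  Sini : Matrix (Fin n) (Fin n) ℝ

namespace LQData

variable {n m : ℕ} (P : LQData n m) (T : ℕ) (Srho : ℕ → Matrix (Fin m) (Fin m) ℝ)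

/-- The backward Riccati recursion `Π_k` associated with the prior covariances
`Σ_{ρ_k}`: `Π_T = F` and
`Π_k = A_kᵀ Π_{k+1} A_k − (1/ε) A_kᵀ Π_{k+1} B_k Σ^{1/2} (I + Σ^{1/2} C_k Σ^{1/2})⁻¹ Σ^{1/2} B_kᵀ Π_{k+1} A_k`
with `C_k = (R_k + B_kᵀ Π_{k+1} B_k)/ε`. -/
noncomputable def Ric (k : ℕ) : Matrix (Fin n) (Fin n) ℝ :=
  if h : T ≤ k then P.F
  else
    let Pk := Ric (k + 1)
    let S := msqrt (Srho k)
    let C := (1 / P.ε) • (P.R k + (P.B k)ᵀ * Pk * P.B k)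
    (P.A k)ᵀ * Pk * P.A k -
      (1 / P.ε) • ((P.A k)ᵀ * Pk * P.B k * S * (1 + S * C * S)⁻¹ * S * (P.B k)ᵀ * Pk * P.A k)
termination_by T - k
decreasing_by omega

/-- `C_k = (R_k + B_kᵀ Π_{k+1} B_k)/ε`. -/
noncomputable def Ck (k : ℕ) : Matrix (Fin m) (Fin m) ℝ :=
  (1 / P.ε) • (P.R k + (P.B k)ᵀ * P.Ric T Srho (k + 1) * P.B k)

/-- `Σ_{Q_k} = ε (R_k + B_kᵀ Π_{k+1} B_k)⁻¹`. -/
noncomputable def SigQ (k : ℕ) : Matrix (Fin m) (Fin m) ℝ :=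
  P.ε • (P.R k + (P.B k)ᵀ * P.Ric T Srho (k + 1) * P.B k)⁻¹

/-- Covariance `Σ_{π_k}` of the optimal policy for the fixed prior. -/
noncomputable def SigPi (k : ℕ) : Matrix (Fin m) (Fin m) ℝ :=
  msqrt (Srho k) * (1 + msqrt (Srho k) * P.Ck T Srho k * msqrt (Srho k))⁻¹ * msqrt (Srho k)

/-- Feedback gain `P_k = −(1/ε) Σ_{π_k} B_kᵀ Π_{k+1} A_k`. -/
noncomputable def Pgain (k : ℕ) : Matrix (Fin m) (Fin n) ℝ :=
  -((1 / P.ε) • (P.SigPi T Srho k * (P.B k)ᵀ * P.Ric T Srho (k + 1) * P.A k))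

/-- Forward state covariance recursion under the optimal policy. -/
noncomputable def Sigx : ℕ → Matrix (Fin n) (Fin n) ℝ
  | 0 => P.Sini
  | k + 1 =>
    (P.A k + P.B k * P.Pgain T Srho k) * Sigx k *
        (P.A k + P.B k * P.Pgain T Srho k)ᵀ +
      P.B k * P.SigPi T Srho k * (P.B k)ᵀ + P.Sw k

/-- The standard LQR Riccati recursion `Π̌_k`. -/
noncomputable def RicLQR (k : ℕ) : Matrix (Fin n) (Fin n) ℝ :=
  if h : T ≤ k then P.F
  else
    let Pk := RicLQR (k + 1)
    (P.A k)ᵀ * Pk * P.A k -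
      (P.A k)ᵀ * Pk * P.B k * (P.R k + (P.B k)ᵀ * Pk * P.B k)⁻¹ * (P.B k)ᵀ * Pk * P.A k
termination_by T - k
decreasing_by omega

/-- `Π̂_k = A_kᵀ ⋯ A_{T−1}ᵀ F A_{T−1} ⋯ A_k`. -/
noncomputable def RicHat (k : ℕ) : Matrix (Fin n) (Fin n) ℝ :=
  if h : T ≤ k then P.F
  else (P.A k)ᵀ * RicHat (k + 1) * P.A k
termination_by T - k
decreasing_by omega

/-- `Σ_{w_{k−1}}` with the convention `Σ_{w_{−1}} := Σ_{x_ini}`. -/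
noncomputable def Swm1 (k : ℕ) : Matrix (Fin n) (Fin n) ℝ :=
  if k = 0 then P.Sini else P.Sw (k - 1)

/-- The matrix `M̌_k` from the sufficient condition for stochastic optimal policies. -/
noncomputable def Mcheck (k : ℕ) : Matrix (Fin m) (Fin m) ℝ :=
  (P.R k + (P.B k)ᵀ * P.RicHat T (k + 1) * P.B k)⁻¹ *
      ((P.B k)ᵀ * P.RicLQR T (k + 1) * P.A k * P.Swm1 k * (P.A k)ᵀ *
        P.RicLQR T (k + 1) * P.B k) *
      (P.R k + (P.B k)ᵀ * P.RicHat T (k + 1) * P.B k)⁻¹ -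
    P.ε • (P.R k + (P.B k)ᵀ * P.RicLQR T (k + 1) * P.B k)⁻¹

/-- State covariance under the zero control input. -/
noncomputable def SigxZero : ℕ → Matrix (Fin n) (Fin n) ℝ
  | 0 => P.Sini
  | k + 1 => P.A k * SigxZero k * (P.A k)ᵀ + P.Sw k

/-- The matrix `M̂_k^zero` from the sufficient condition for deterministic optimal policies. -/
noncomputable def MhatZero (k : ℕ) : Matrix (Fin m) (Fin m) ℝ :=
  (P.R k + (P.B k)ᵀ * P.RicLQR T (k + 1) * P.B k)⁻¹ *
      ((P.B k)ᵀ * P.RicHat T (k + 1) * P.A k * P.SigxZero k * (P.A k)ᵀ *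
        P.RicHat T (k + 1) * P.B k) *
      (P.R k + (P.B k)ᵀ * P.RicLQR T (k + 1) * P.B k)⁻¹ -
    P.ε • (P.R k + (P.B k)ᵀ * P.RicHat T (k + 1) * P.B k)⁻¹


/-- The backward recursion `r_k` for the mean offset:
`r_T = 0` and `r_k = A_k⁻¹ r_{k+1} − Π_k⁻¹ A_kᵀ Π_{k+1} B_k (I + Σ_{ρ_k} C_k)⁻¹ μ_{ρ_k}`. -/
noncomputable def rvec (μ : ℕ → Fin m → ℝ) (k : ℕ) : Fin n → ℝ :=
  if h : T ≤ k then 0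
  else
    ((P.A k)⁻¹).mulVec (rvec μ (k + 1)) -
      ((P.Ric T Srho k)⁻¹ * ((P.A k)ᵀ * P.Ric T Srho (k + 1) * P.B k *
        (1 + Srho k * P.Ck T Srho k)⁻¹)).mulVec (μ k)
termination_by T - k
decreasing_by omega

/-- `Θ_k = ε C_k − ε C_k Σ_{π_k} C_k − (I − C_k Σ_{π_k}) B_kᵀ Π_{k+1} A_k Π_k⁻¹ A_kᵀ Π_{k+1} B_k (I − Σ_{π_k} C_k)`. -/
noncomputable def Theta (k : ℕ) : Matrix (Fin m) (Fin m) ℝ :=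
  P.ε • P.Ck T Srho k - P.ε • (P.Ck T Srho k * P.SigPi T Srho k * P.Ck T Srho k) -
    (1 - P.Ck T Srho k * P.SigPi T Srho k) *
      ((P.B k)ᵀ * P.Ric T Srho (k + 1) * P.A k * (P.Ric T Srho k)⁻¹ *
        ((P.A k)ᵀ * P.Ric T Srho (k + 1) * P.B k)) *
      (1 - P.SigPi T Srho k * P.Ck T Srho k)

end LQData

/-- Extend a `T`-tuple of matrices to a function on `ℕ` (by zero). -/
def extT {m : ℕ} (T : ℕ) (σ : Fin T → Matrix (Fin m) (Fin m) ℝ) :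
    ℕ → Matrix (Fin m) (Fin m) ℝ :=
  fun k => if h : k < T then σ ⟨k, h⟩ else 0


/-- Extend a `T`-tuple of vectors to a function on `ℕ` (by zero). -/
def extV {m : ℕ} (T : ℕ) (μ : Fin T → Fin m → ℝ) : ℕ → Fin m → ℝ :=
  fun k => if h : k < T then μ ⟨k, h⟩ else 0

namespace LQData

variable {n m : ℕ} (P : LQData n m) (T : ℕ)

/-- The reduced objective `J̌` as a function of the `T`-tuple of prior covariances. -/
noncomputable def Jcheck (σ : Fin T → Matrix (Fin m) (Fin m) ℝ) : ℝ :=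
  (1 / 2) * ((P.Ric T (extT T σ) 0 * P.Sini).trace +
    ∑ k : Fin T,
      (P.ε * Real.log ((extT T σ k + P.SigQ T (extT T σ) k).det / (P.SigQ T (extT T σ) k).det) +
        (P.Ric T (extT T σ) (k + 1) * P.Sw k).trace))

/-- `L_k = (Σ_{Q_k} + Σ_{ρ_k})⁻¹`. -/
noncomputable def Lmat (Srho : ℕ → Matrix (Fin m) (Fin m) ℝ) (k : ℕ) :
    Matrix (Fin m) (Fin m) ℝ :=
  (P.SigQ T Srho k + Srho k)⁻¹

/-- `E_k = (1/ε) Σ_{Q_k} B_kᵀ Π_{k+1} A_k`. -/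
noncomputable def Emat (Srho : ℕ → Matrix (Fin m) (Fin m) ℝ) (k : ℕ) :
    Matrix (Fin m) (Fin n) ℝ :=
  (1 / P.ε) • (P.SigQ T Srho k * (P.B k)ᵀ * P.Ric T Srho (k + 1) * P.A k)

/-- `J̌'_k = (ε/2) L_k (Σ_{ρ_k} + Σ_{Q_k} − E_k Σ_{x_k} E_kᵀ) L_k`. -/
noncomputable def Jprime (Srho : ℕ → Matrix (Fin m) (Fin m) ℝ) (k : ℕ) :
    Matrix (Fin m) (Fin m) ℝ :=
  (P.ε / 2) • (P.Lmat T Srho k *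
    (Srho k + P.SigQ T Srho k - P.Emat T Srho k * P.Sigx T Srho k * (P.Emat T Srho k)ᵀ) *
    P.Lmat T Srho k)

/-- The alternating-optimization update map `𝒯` on `T`-tuples of prior covariances:
`𝒯(σ)_k = Σ_{π_k} + P_k Σ_{x_k} P_kᵀ`. -/
noncomputable def Tmap (σ : Fin T → Matrix (Fin m) (Fin m) ℝ) :
    Fin T → Matrix (Fin m) (Fin m) ℝ :=
  fun k =>
    P.SigPi T (extT T σ) k +
      P.Pgain T (extT T σ) k * P.Sigx T (extT T σ) k * (P.Pgain T (extT T σ) k)ᵀ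

/-- The objective `J` as a function of the prior means, for fixed prior covariances:
`J(μ) = (1/2)( r_0ᵀ Π_0 r_0 + Σ_k μ_{ρ_k}ᵀ Θ_k μ_{ρ_k} )`. -/
noncomputable def Jmean (Srho : ℕ → Matrix (Fin m) (Fin m) ℝ) (μ : Fin T → Fin m → ℝ) : ℝ :=
  (1 / 2) *
    (P.rvec T Srho (extV T μ) 0 ⬝ᵥ (P.Ric T Srho 0).mulVec (P.rvec T Srho (extV T μ) 0) +
      ∑ k : Fin T, μ k ⬝ᵥ (P.Theta T Srho k).mulVec (μ k))

end LQData

open Matrix Filter Topology LQData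

/-!
Write `S = Σ^{1/2}`, `Q = Π^{1/2}`, `K = Q B S` and `D = ε I + S R S`. Since `KᵀK = S Bᵀ Π B S`,
the matrix inverted on the left is `ε⁻¹ (D + KᵀK)`, so the left side is
`Aᵀ Q (I - K (D + KᵀK)⁻¹ Kᵀ) Q A`, and the Woodbury identity
`(I + K D⁻¹ Kᵀ)⁻¹ = I - K (D + KᵀK)⁻¹ Kᵀ` turns it into the right side.
-/

lemma msqrt_eq_cfc {d : ℕ} {X : Matrix (Fin d) (Fin d) ℝ} (hX : X.PosSemidef) :
    msqrt X = cfc Real.sqrt X := by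
  rw [msqrt, dif_pos hX, hX.1.cfc_eq, IsHermitian.cfc, Unitary.conjStarAlgAut_apply]
  rfl -- `RCLike.ofReal : ℝ → ℝ` is the identity

lemma isSymm_msqrt {d : ℕ} (X : Matrix (Fin d) (Fin d) ℝ) : (msqrt X).IsSymm := by
  by_cases hX : X.PosSemidef
  · rw [IsSymm, msqrt_eq_cfc hX, ← conjTranspose_eq_transpose_of_trivial]
    exact (cfc_predicate Real.sqrt X : IsSelfAdjoint _)
  · simp [msqrt, hX, IsSymm]

lemma msqrt_mul_self {d : ℕ} {X : Matrix (Fin d) (Fin d) ℝ} (hX : X.PosSemidef) :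
    msqrt X * msqrt X = X := by
  have hspec : ∀ x ∈ spectrum ℝ X, 0 ≤ x := fun _ hx =>
    (posSemidef_iff_isHermitian_and_spectrum_nonneg.mp hX).2 hx
  rw [msqrt_eq_cfc hX, ← cfc_mul Real.sqrt Real.sqrt X]
  conv_rhs => rw [← cfc_id' ℝ X hX.1]
  exact cfc_congr fun x hx => Real.mul_self_sqrt (hspec x hx)

namespace Matrix

variable {ι κ α : Type*} [Fintype ι] [Fintype κ] [DecidableEq ι] [DecidableEq κ] [CommRing α]

theorem inv_one_add_mul_inv_mul {D : Matrix κ κ α} (U : Matrix ι κ α) (V : Matrix κ ι α)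
    (hD : IsUnit D) (hDVU : IsUnit (D + V * U)) :
    (1 + U * D⁻¹ * V)⁻¹ = 1 - U * (D + V * U)⁻¹ * V := by
  have hD' : D⁻¹⁻¹ = D := nonsing_inv_nonsing_inv D ((isUnit_iff_isUnit_det D).mp hD)
  simpa [hD'] using add_mul_mul_inv_eq_sub 1 U D⁻¹ V isUnit_one (isUnit_nonsing_inv_iff.mpr hD)
    (by simpa [hD'] using hDVU)

end Matrix

theorem riccati_step_woodbury_of_isSymm {ι κ : Type*} [Fintype ι] [Fintype κ] [DecidableEq ι]
    [DecidableEq κ] {ε : ℝ} (hε : 0 < ε) (A : Matrix ι ι ℝ) (B : Matrix ι κ ℝ)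
    {R : Matrix κ κ ℝ} (hR : R.PosSemidef) {P Q : Matrix ι ι ℝ} (hQ : Q.IsSymm)
    (hQP : Q * Q = P) {S : Matrix κ κ ℝ} (hS : S.IsSymm) :
    Aᵀ * P * A -
        (1 / ε) • (Aᵀ * P * B * S * (1 + S * ((1 / ε) • (R + Bᵀ * P * B)) * S)⁻¹ *
          S * Bᵀ * P * A) =
      Aᵀ * Q * (1 + Q * B * S * (ε • 1 + S * R * S)⁻¹ * S * Bᵀ * Q)⁻¹ * Q * A := by
  subst hQP
  set K := Q * B * S
  set D := ε • (1 : Matrix κ κ ℝ) + S * R * S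
  have hKt : Kᵀ = S * Bᵀ * Q := by
    simp only [K, transpose_mul, hS.eq, hQ.eq, Matrix.mul_assoc]
  have hD : D.PosDef := by
    refine (PosDef.one.smul hε).add_posSemidef ?_
    simpa [hS.eq] using hR.conjTranspose_mul_mul_same S
  have hM : (D + Kᵀ * K).PosDef :=
    hD.add_posSemidef (by simpa using posSemidef_conjTranspose_mul_self K)
  have hinner : 1 + S * ((1 / ε) • (R + Bᵀ * (Q * Q) * B)) * S = ε⁻¹ • (D + Kᵀ * K) := by
    rw [hKt]
    simp only [D, K, smul_add, smul_smul, inv_mul_cancel₀ hε.ne', one_smul, one_div,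
      Matrix.mul_smul, Matrix.smul_mul, Matrix.mul_add, Matrix.add_mul, Matrix.mul_assoc, add_assoc]
  have hinner_inv : (ε⁻¹ • (D + Kᵀ * K))⁻¹ = ε • (D + Kᵀ * K)⁻¹ := by
    refine inv_eq_left_inv ?_
    rw [smul_mul_smul_comm, mul_inv_cancel₀ hε.ne', one_smul,
      nonsing_inv_mul _ ((isUnit_iff_isUnit_det _).mp hM.isUnit)]
  have hrhs : Q * B * S * D⁻¹ * S * Bᵀ * Q = K * D⁻¹ * Kᵀ := by
    rw [hKt]
    simp only [K, Matrix.mul_assoc]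
  rw [hinner, hinner_inv, hrhs, inv_one_add_mul_inv_mul K Kᵀ hD.isUnit hM.isUnit, hKt]
  simp only [K, Matrix.mul_sub, Matrix.sub_mul, Matrix.mul_one, Matrix.mul_smul, Matrix.smul_mul,
    smul_smul, one_div, inv_mul_cancel₀ hε.ne', one_smul, Matrix.mul_assoc]

theorem riccati_step_woodbury_general {n m : ℕ} (ε : ℝ) (hε : 0 < ε)
    (A : Matrix (Fin n) (Fin n) ℝ) (B : Matrix (Fin n) (Fin m) ℝ)
    (R : Matrix (Fin m) (Fin m) ℝ) (hR : R.PosDef)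
    (Pm : Matrix (Fin n) (Fin n) ℝ) (hPm : Pm.PosSemidef)
    (Sg : Matrix (Fin m) (Fin m) ℝ) :
    Aᵀ * Pm * A -
        (1 / ε) • (Aᵀ * Pm * B * msqrt Sg *
          (1 + msqrt Sg * ((1 / ε) • (R + Bᵀ * Pm * B)) * msqrt Sg)⁻¹ *
          msqrt Sg * Bᵀ * Pm * A) =
      Aᵀ * msqrt Pm *
        (1 + msqrt Pm * B * msqrt Sg *
          (ε • (1 : Matrix (Fin m) (Fin m) ℝ) + msqrt Sg * R * msqrt Sg)⁻¹ *
          msqrt Sg * Bᵀ * msqrt Pm)⁻¹ * msqrt Pm * A :=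
  riccati_step_woodbury_of_isSymm hε A B hR.posSemidef (isSymm_msqrt Pm) (msqrt_mul_self hPm)
    (isSymm_msqrt Sg)

theorem riccati_step_woodbury {n m : ℕ} (hn : 1 ≤ n) (hm : 1 ≤ m) (ε : ℝ) (hε : 0 < ε)
    (A : Matrix (Fin n) (Fin n) ℝ) (B : Matrix (Fin n) (Fin m) ℝ)
    (R : Matrix (Fin m) (Fin m) ℝ) (hR : R.PosDef)
    (Pm : Matrix (Fin n) (Fin n) ℝ) (hPm : Pm.PosSemidef)
    (Sg : Matrix (Fin m) (Fin m) ℝ) (hSg : Sg.PosSemidef) :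
    Aᵀ * Pm * A -
        (1 / ε) • (Aᵀ * Pm * B * msqrt Sg *
          (1 + msqrt Sg * ((1 / ε) • (R + Bᵀ * Pm * B)) * msqrt Sg)⁻¹ *
          msqrt Sg * Bᵀ * Pm * A) =
      Aᵀ * msqrt Pm *
        (1 + msqrt Pm * B * msqrt Sg *
          (ε • (1 : Matrix (Fin m) (Fin m) ℝ) + msqrt Sg * R * msqrt Sg)⁻¹ *
          msqrt Sg * Bᵀ * msqrt Pm)⁻¹ * msqrt Pm * A :=
  riccati_step_woodbury_general ε hε A B R hR Pm hPm Sg
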